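/- arXiv:2210.08210 — 2 statements merged into one kernel-verified Lean document; each statement's English description precedes it below -/
import Mathlib

section
/- Let C be a finite type of classes, and let G₁, G₂ ⊆ C be two subsets, each nonempty and each a proper subset of C. Then DetErr(G₁) ∩ DetErr(G₂) is nonempty, where DetErr(G) = {(c, k) ∈ C × C | (c ∈ G ∧ k ∉ G) ∨ (c ∉ G ∧ k ∈ G)}. -/
/-- For a finite type `C` and two nonempty proper subsets
`G₁, G₂ ⊆ C`, the intersection `DetErr(G₁) ∩ DetErr(G₂)` is nonempty. -/
theorem stmt_5 {C : Type*} [Fintype C] (G₁ G₂ : Set C)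
    (h₁ne : G₁.Nonempty) (h₁proper : G₁ ≠ Set.univ)
    (h₂ne : G₂.Nonempty) (h₂proper : G₂ ≠ Set.univ) :
    ({p : C × C | (p.1 ∈ G₁ ∧ p.2 ∉ G₁) ∨ (p.1 ∉ G₁ ∧ p.2 ∈ G₁)} ∩
     {p : C × C | (p.1 ∈ G₂ ∧ p.2 ∉ G₂) ∨ (p.1 ∉ G₂ ∧ p.2 ∈ G₂)}).Nonempty := by
  obtain ⟨a, ha⟩ := h₁ne
  obtain ⟨b, hb⟩ := (Set.ne_univ_iff_exists_notMem _).mp h₁proper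
  obtain ⟨x, hx⟩ := h₂ne
  obtain ⟨y, hy⟩ := (Set.ne_univ_iff_exists_notMem _).mp h₂proper
  by_cases ha2 : a ∈ G₂ <;> by_cases hb2 : b ∈ G₂
  · by_cases hy1 : y ∈ G₁
    · exact ⟨(y, b), Or.inl ⟨hy1, hb⟩, Or.inr ⟨hy, hb2⟩⟩
    · exact ⟨(a, y), Or.inl ⟨ha, hy1⟩, Or.inl ⟨ha2, hy⟩⟩
  · exact ⟨(a, b), Or.inl ⟨ha, hb⟩, Or.inl ⟨ha2, hb2⟩⟩
  · exact ⟨(a, b), Or.inl ⟨ha, hb⟩, Or.inr ⟨ha2, hb2⟩⟩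
  · by_cases hx1 : x ∈ G₁
    · exact ⟨(x, b), Or.inl ⟨hx1, hb⟩, Or.inl ⟨hx, hb2⟩⟩
    · exact ⟨(a, x), Or.inl ⟨ha, hx1⟩, Or.inr ⟨ha2, hx⟩⟩
end

section
/- Let C be a finite type of classes, and let G₁, G₂ ⊆ C be two finite subsets, each nonempty and each a proper subset of C. Then the Jaccard similarity index of their detectable-error sets, Jaccard(DetErr(G₁), DetErr(G₂)) = |DetErr(G₁) ∩ DetErr(G₂)| / |DetErr(G₁) ∪ DetErr(G₂)| (as a real number), is strictly positive. -/
/-- For a finite type `C` and two nonempty proper subsets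
`G₁, G₂ ⊆ C` (as finsets), the Jaccard similarity index of their
detectable-error sets, `|DetErr(G₁) ∩ DetErr(G₂)| / |DetErr(G₁) ∪ DetErr(G₂)|`,
is strictly positive. -/
theorem stmt_6 {C : Type*} [Fintype C] [DecidableEq C] (G₁ G₂ : Finset C)
    (h₁ne : G₁.Nonempty) (h₁proper : G₁ ≠ Finset.univ)
    (h₂ne : G₂.Nonempty) (h₂proper : G₂ ≠ Finset.univ) :
    0 < (((Finset.univ.filter
            (fun p : C × C => (p.1 ∈ G₁ ∧ p.2 ∉ G₁) ∨ (p.1 ∉ G₁ ∧ p.2 ∈ G₁)) ∩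
          Finset.univ.filter
            (fun p : C × C => (p.1 ∈ G₂ ∧ p.2 ∉ G₂) ∨ (p.1 ∉ G₂ ∧ p.2 ∈ G₂))).card : ℝ) /
         ((Finset.univ.filter
            (fun p : C × C => (p.1 ∈ G₁ ∧ p.2 ∉ G₁) ∨ (p.1 ∉ G₁ ∧ p.2 ∈ G₁)) ∪
          Finset.univ.filter
            (fun p : C × C => (p.1 ∈ G₂ ∧ p.2 ∉ G₂) ∨ (p.1 ∉ G₂ ∧ p.2 ∈ G₂))).card : ℝ)) := by
  set D₁ := Finset.univ.filter
      (fun p : C × C => (p.1 ∈ G₁ ∧ p.2 ∉ G₁) ∨ (p.1 ∉ G₁ ∧ p.2 ∈ G₁)) with hD₁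
  set D₂ := Finset.univ.filter
      (fun p : C × C => (p.1 ∈ G₂ ∧ p.2 ∉ G₂) ∨ (p.1 ∉ G₂ ∧ p.2 ∈ G₂)) with hD₂
  obtain ⟨a, ha⟩ := h₁ne
  obtain ⟨b, hb⟩ : ∃ b, b ∉ G₁ := by
    by_contra h
    push_neg at h
    exact h₁proper (Finset.eq_univ_iff_forall.mpr h)
  obtain ⟨c, hc⟩ := h₂ne
  obtain ⟨d, hd⟩ : ∃ d, d ∉ G₂ := by
    by_contra h
    push_neg at h
    exact h₂proper (Finset.eq_univ_iff_forall.mpr h)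
  have hmem : ∀ p : C × C, p ∈ D₁ ∩ D₂ ↔
      (((p.1 ∈ G₁ ∧ p.2 ∉ G₁) ∨ (p.1 ∉ G₁ ∧ p.2 ∈ G₁)) ∧
       ((p.1 ∈ G₂ ∧ p.2 ∉ G₂) ∨ (p.1 ∉ G₂ ∧ p.2 ∈ G₂))) := by
    intro p
    simp [hD₁, hD₂, Finset.mem_inter, Finset.mem_filter]
  have hne : (D₁ ∩ D₂).Nonempty := by
    by_cases ha2 : a ∈ G₂ <;> by_cases hb2 : b ∈ G₂
    · by_cases hd1 : d ∈ G₁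
      · exact ⟨(d, b), (hmem (d, b)).mpr ⟨Or.inl ⟨hd1, hb⟩, Or.inr ⟨hd, hb2⟩⟩⟩
      · exact ⟨(a, d), (hmem (a, d)).mpr ⟨Or.inl ⟨ha, hd1⟩, Or.inl ⟨ha2, hd⟩⟩⟩
    · exact ⟨(a, b), (hmem (a, b)).mpr ⟨Or.inl ⟨ha, hb⟩, Or.inl ⟨ha2, hb2⟩⟩⟩
    · exact ⟨(a, b), (hmem (a, b)).mpr ⟨Or.inl ⟨ha, hb⟩, Or.inr ⟨ha2, hb2⟩⟩⟩
    · by_cases hc1 : c ∈ G₁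
      · exact ⟨(c, b), (hmem (c, b)).mpr ⟨Or.inl ⟨hc1, hb⟩, Or.inl ⟨hc, hb2⟩⟩⟩
      · exact ⟨(a, c), (hmem (a, c)).mpr ⟨Or.inl ⟨ha, hc1⟩, Or.inr ⟨ha2, hc⟩⟩⟩
  have hcard : 0 < (D₁ ∩ D₂).card := Finset.card_pos.mpr hne
  have hcard' : 0 < (D₁ ∪ D₂).card :=
    lt_of_lt_of_le hcard (Finset.card_le_card (Finset.inter_subset_union))
  exact div_pos (by exact_mod_cast hcard) (by exact_mod_cast hcard')
end
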